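/- The function p ↦ log((1-p)(2-p)Γ((1-p)/2)) is strictly concave on the interval (0,1). -/

import Mathlib

/-!
With `t = 1 - p / 2` the function is `log Γ(t + 1/2) + log t + log 4`, so it suffices that
`log Γ(t + 1/2) + log t = (log Γ(t + 1/2) - t log t) + (t + 1) log t` is strictly concave on
`(0, 1)`. The second summand has second derivative `(t - 1) / t² < 0`. The first is concave on
`(0, ∞)`: it is the pointwise limit of the Bohr–Mollerup approximants
`log Γₙ(t + 1/2) - t log t`, which telescope into an affine function, the concave tail
`-(t + n + 1) log (t + n + 1)`, and a sum of concave blocks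
`(s + 1) log (s + 1) - s log s - log (s + 1/2)` at `s = t + m`.
-/

open Real Set Filter Topology

section Convexity

variable {𝕜 E F β ι : Type*}

theorem ConcaveOn.finsetSum [Semiring 𝕜] [PartialOrder 𝕜] [AddCommMonoid E] [AddCommMonoid β]
    [PartialOrder β] [IsOrderedAddMonoid β] [SMul 𝕜 E] [Module 𝕜 β] {s : Set E}
    {t : Finset ι} {f : ι → E → β} (hs : Convex 𝕜 s) (hf : ∀ i ∈ t, ConcaveOn 𝕜 s (f i)) :
    ConcaveOn 𝕜 s (fun x => ∑ i ∈ t, f i x) := by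
  classical
  induction t using Finset.induction_on with
  | empty => simpa using concaveOn_const (0 : β) hs
  | insert i t hi ih =>
    simp only [Finset.sum_insert hi]
    exact (hf i (t.mem_insert_self i)).add (ih fun j hj => hf j (Finset.mem_insert_of_mem hj))

theorem ConcaveOn.of_tendsto [Semiring 𝕜] [PartialOrder 𝕜] [AddCommMonoid E] [SMul 𝕜 E]
    [AddCommMonoid β] [PartialOrder β] [TopologicalSpace β] [OrderClosedTopology β]
    [ContinuousAdd β] [SMul 𝕜 β] [ContinuousConstSMul 𝕜 β] {l : Filter ι} [l.NeBot]
    {s : Set E} {f : ι → E → β} {g : E → β} (hf : ∀ i, ConcaveOn 𝕜 s (f i))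
    (hg : ∀ x ∈ s, Tendsto (fun i => f i x) l (𝓝 (g x))) (hs : Convex 𝕜 s) : ConcaveOn 𝕜 s g :=
  ⟨hs, fun x hx y hy a b ha hb hab =>
    le_of_tendsto_of_tendsto' (((hg x hx).const_smul a).add ((hg y hy).const_smul b))
      (hg _ (hs hx hy ha hb hab)) fun i => (hf i).2 hx hy ha hb hab⟩

theorem StrictConcaveOn.comp_affineMap [Field 𝕜] [LinearOrder 𝕜] [AddCommGroup E] [AddCommGroup F]
    [Module 𝕜 E] [Module 𝕜 F] [AddCommMonoid β] [PartialOrder β] [SMul 𝕜 β] {f : F → β}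
    {g : E →ᵃ[𝕜] F} (hg : Function.Injective g) {s : Set F} (hf : StrictConcaveOn 𝕜 s f) :
    StrictConcaveOn 𝕜 (g ⁻¹' s) (f ∘ g) :=
  ⟨hf.1.affine_preimage _, fun x hx y hy hxy a b ha hb hab => by
    simpa only [Function.comp_apply, Convex.combo_affine_apply hab] using
      hf.2 hx hy (hg.ne hxy) ha hb hab⟩

end Convexity

theorem strictConcaveOn_of_hasDerivAt2_neg {D : Set ℝ} (hD : Convex ℝ D)
    (hDo : IsOpen D) {f f' f'' : ℝ → ℝ} (hf : ∀ x ∈ D, HasDerivAt f (f' x) x)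
    (hf' : ∀ x ∈ D, HasDerivAt f' (f'' x) x) (hf'' : ∀ x ∈ D, f'' x < 0) :
    StrictConcaveOn ℝ D f := by
  have hf'_anti : StrictAntiOn f' D :=
    strictAntiOn_of_hasDerivWithinAt_neg hD
      (fun x hx => (hf' x hx).continuousAt.continuousWithinAt)
      (by simpa only [hDo.interior_eq] using fun x hx => (hf' x hx).hasDerivWithinAt)
      (by rwa [hDo.interior_eq])
  refine StrictAntiOn.strictConcaveOn_of_deriv hD
    (fun x hx => (hf x hx).continuousAt.continuousWithinAt) ?_
  rw [hDo.interior_eq]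
  exact hf'_anti.congr fun x hx => (hf x hx).deriv.symm

/-- Since `(s + 1) log (s + 1) - s log s - 1 = ∫ u in s..s+1, log u`, this is, up to the constant
`1`, the error of the midpoint rule for `log` on `[s, s + 1]`. -/
noncomputable def logGammaBlock (s : ℝ) : ℝ :=
  (s + 1) * log (s + 1) - s * log s - log (s + 1 / 2)

theorem strictConcaveOn_logGammaBlock : StrictConcaveOn ℝ (Ioi 0) logGammaBlock := by
  refine strictConcaveOn_of_hasDerivAt2_neg (convex_Ioi 0) isOpen_Ioi
    (f' := fun s => log (s + 1) - log s - (s + 1 / 2)⁻¹)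
    (f'' := fun s => (s + 1)⁻¹ - s⁻¹ + ((s + 1 / 2) ^ 2)⁻¹) ?_ ?_ ?_
  · intro s (hs : 0 < s)
    have := (((hasDerivAt_mul_log (by positivity : s + 1 ≠ 0)).comp_add_const s 1).sub
      (hasDerivAt_mul_log hs.ne')).sub (((hasDerivAt_id s).add_const (1 / 2)).log (by positivity))
    exact this.congr_deriv (by simp only [id]; ring)
  · intro s (hs : 0 < s)
    have := ((((hasDerivAt_id s).add_const 1).log (by positivity)).sub (hasDerivAt_log hs.ne')).sub
      (((hasDerivAt_id s).add_const (1 / 2)).inv (by positivity))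
    exact this.congr_deriv (by simp only [id]; ring)
  · intro s (hs : 0 < s)
    have : (s + 1)⁻¹ - s⁻¹ + ((s + 1 / 2) ^ 2)⁻¹ = -(s * (s + 1) * (2 * s + 1) ^ 2)⁻¹ := by
      field_simp
      ring
    simp only [this, neg_lt_zero]
    positivity

theorem logGammaSeq_add_half_sub_mul_log (t : ℝ) (n : ℕ) :
    BohrMollerup.logGammaSeq (t + 1 / 2) n - t * log t =
      (t + 1 / 2) * log n + log n.factorial + ∑ m ∈ Finset.range (n + 1), logGammaBlock (t + m)
        - (t + (n + 1)) * log (t + (n + 1)) := by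
  have htelescope := Finset.sum_range_sub (fun k : ℕ => (t + k) * log (t + k)) (n + 1)
  simp only [logGammaBlock, Finset.sum_sub_distrib, Nat.cast_add, Nat.cast_one, Nat.cast_zero,
    add_zero] at htelescope ⊢
  rw [BohrMollerup.logGammaSeq]
  simp only [add_assoc, add_comm (1 / 2 : ℝ)] at htelescope ⊢
  rw [htelescope]
  ring

theorem concaveOn_logGammaSeq_add_half_sub_mul_log (n : ℕ) :
    ConcaveOn ℝ (Ioi 0) fun t => BohrMollerup.logGammaSeq (t + 1 / 2) n - t * log t := by
  have hlinear : ConcaveOn ℝ (Ioi 0) fun t : ℝ => (t + 1 / 2) * log n + log n.factorial :=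
    ⟨convex_Ioi 0, fun x _ y _ a b _ _ hab => le_of_eq <| by
      simp only [smul_eq_mul]
      linear_combination (log n / 2 + log n.factorial) * hab⟩
  have hblocks : ConcaveOn ℝ (Ioi 0) fun t => ∑ m ∈ Finset.range (n + 1), logGammaBlock (t + m) :=
    ConcaveOn.finsetSum (convex_Ioi 0) fun m _ =>
      (strictConcaveOn_logGammaBlock.concaveOn.translate_left (m : ℝ)).subset
        (fun t (ht : 0 < t) => show (0 : ℝ) < m + t by positivity) (convex_Ioi 0)
  have htail : ConcaveOn ℝ (Ioi 0) fun t : ℝ => -((t + (n + 1)) * log (t + (n + 1))) :=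
    (convexOn_mul_log.translate_left ((n : ℝ) + 1)).neg.subset
      (fun t (ht : 0 < t) => show (0 : ℝ) ≤ (n + 1) + t by positivity) (convex_Ioi 0)
  refine ((hlinear.add hblocks).add htail).congr fun t _ => ?_
  simp only [Pi.add_apply, logGammaSeq_add_half_sub_mul_log]
  ring

theorem concaveOn_log_Gamma_add_half_sub_mul_log :
    ConcaveOn ℝ (Ioi 0) fun t => log (Gamma (t + 1 / 2)) - t * log t :=
  ConcaveOn.of_tendsto (l := atTop) concaveOn_logGammaSeq_add_half_sub_mul_log
    (fun t (ht : 0 < t) => (BohrMollerup.tendsto_log_gamma (by positivity)).sub_const _)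
    (convex_Ioi 0)

theorem strictConcaveOn_add_one_mul_log : StrictConcaveOn ℝ (Ioo 0 1) fun t => (t + 1) * log t := by
  refine strictConcaveOn_of_hasDerivAt2_neg (convex_Ioo 0 1) isOpen_Ioo
    (f' := fun t => log t + 1 + t⁻¹) (f'' := fun t => t⁻¹ - (t ^ 2)⁻¹) ?_ ?_ ?_
  · intro t ⟨ht, _⟩
    exact (((hasDerivAt_id t).add_const 1).mul (hasDerivAt_log ht.ne')).congr_deriv
      (by simp only [id]; field_simp; ring)
  · intro t ⟨ht, _⟩
    exact (((hasDerivAt_log ht.ne').add_const 1).add (hasDerivAt_inv ht.ne')).congr_deriv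
      (by ring)
  · intro t ⟨ht0, ht1⟩
    have : t⁻¹ - (t ^ 2)⁻¹ = (t - 1) / t ^ 2 := by field_simp
    rw [this]
    exact div_neg_of_neg_of_pos (by linarith) (by positivity)

theorem strictConcaveOn_log_Gamma_add_half_add_log :
    StrictConcaveOn ℝ (Ioo 0 1) fun t => log (Gamma (t + 1 / 2)) + log t :=
  (strictConcaveOn_add_one_mul_log.add_concaveOn
    (concaveOn_log_Gamma_add_half_sub_mul_log.subset Ioo_subset_Ioi_self (convex_Ioo 0 1))).congr
    fun t _ => by simp only [Pi.add_apply]; ring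

theorem log_mul_mul_Gamma_half {p : ℝ} (hp : p < 1) :
    log ((1 - p) * (2 - p) * Gamma ((1 - p) / 2)) =
      log (Gamma (1 - p / 2 + 1 / 2)) + log (1 - p / 2) + log 4 := by
  have hGamma : Gamma (1 - p / 2 + 1 / 2) = (1 - p) / 2 * Gamma ((1 - p) / 2) := by
    rw [show 1 - p / 2 + 1 / 2 = (1 - p) / 2 + 1 by ring, Gamma_add_one (by linarith)]
  have hpos : 0 < Gamma (1 - p / 2 + 1 / 2) := Gamma_pos_of_pos (by linarith)
  rw [← log_mul hpos.ne' (by linarith), ← log_mul (mul_pos hpos (by linarith)).ne' (by norm_num),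
    hGamma]
  congr 1
  ring

theorem log_c2_strictly_concave :
    StrictConcaveOn ℝ (Ioo (0:ℝ) 1)
      (fun p => Real.log ((1 - p) * (2 - p) * Real.Gamma ((1 - p) / 2))) := by
  have hmaps : Ioo (0 : ℝ) 1 ⊆ AffineMap.lineMap (1 : ℝ) (1 / 2) ⁻¹' Ioo 0 1 := by
    intro p ⟨hp0, hp1⟩
    simp only [mem_preimage, AffineMap.lineMap_apply_ring', mem_Ioo]
    constructor <;> linarith
  -- `AffineMap.lineMap 1 (1 / 2) p = 1 - p / 2`
  have h := strictConcaveOn_log_Gamma_add_half_add_log.comp_affineMap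
    (AffineMap.lineMap_injective ℝ (by norm_num : (1 : ℝ) ≠ 1 / 2))
  refine ((h.subset hmaps (convex_Ioo 0 1)).add_const (log 4)).congr fun p ⟨_, hp⟩ => ?_
  simp only [Pi.add_apply, Function.comp_apply, AffineMap.lineMap_apply_ring',
    log_mul_mul_Gamma_half hp]
  ring_nf
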